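/- A function D: I_M^L → [0,1] is a discrete copula if and only if there exists an L-dimensional stochastic array A of order M such that D(i₁/M,…,i_L/M) = (1/M) Σ_{ν₁=1}^{i₁} ⋯ Σ_{ν_L=1}^{i_L} a_{ν₁…ν_L} for all i₁,…,i_L ∈ {0,1,…,M}. -/

import Mathlib

open Finset

/-- The sign `(-1)^{#{ℓ : ε ℓ = false}}` appearing in `L`-fold first-order differences. -/
def boxSign {L : ℕ} (ε : Fin L → Bool) : ℝ :=
  (-1 : ℝ) ^ (Finset.univ.filter (fun ℓ => ε ℓ = false)).card

/-- `D` is a discrete copula on `I_M^L`: the lattice point `(i₁/M, …, i_L/M)` is encoded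
by an index vector `i : Fin L → ℕ` with `i ℓ ≤ M`.  The conditions are: values in `[0,1]`,
groundedness (D1), uniform margins (D2), and `L`-increasingness over unit lattice boxes (D3). -/
def IsDiscreteCopula (M L : ℕ) (D : (Fin L → ℕ) → ℝ) : Prop :=
  (∀ i : Fin L → ℕ, (∀ ℓ, i ℓ ≤ M) → D i ∈ Set.Icc (0 : ℝ) 1) ∧
  (∀ i : Fin L → ℕ, (∀ ℓ, i ℓ ≤ M) → (∃ ℓ, i ℓ = 0) → D i = 0) ∧
  (∀ ℓ : Fin L, ∀ k : ℕ, k ≤ M →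
    D (fun l => if l = ℓ then k else M) = (k : ℝ) / M) ∧
  (∀ i : Fin L → ℕ, (∀ ℓ, 1 ≤ i ℓ ∧ i ℓ ≤ M) →
    0 ≤ ∑ ε : Fin L → Bool,
        boxSign ε * D (fun ℓ => if ε ℓ then i ℓ else i ℓ - 1))

/-- An `L`-dimensional stochastic array of order `M`: nonnegative entries (indexed by
`ν : Fin L → Fin M`, where `ν ℓ` encodes the index `ν ℓ + 1 ∈ {1,…,M}`), and every line sum
(fixing one index and summing over the others) equals `1`. -/
def IsStochasticArray (M L : ℕ) (A : (Fin L → Fin M) → ℝ) : Prop :=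
  (∀ ν, 0 ≤ A ν) ∧
  (∀ ℓ : Fin L, ∀ j : Fin M,
    ∑ ν : Fin L → Fin M, (if ν ℓ = j then A ν else 0) = 1)

/-- A permutation array: a stochastic array all of whose entries lie in `{0, 1}`. -/
def IsPermutationArray (M L : ℕ) (A : (Fin L → Fin M) → ℝ) : Prop :=
  IsStochasticArray M L A ∧ ∀ ν, A ν = 0 ∨ A ν = 1

/-- The normalized cumulative sum `(1/M) Σ_{ν₁ ≤ i₁} ⋯ Σ_{ν_L ≤ i_L} a_{ν₁…ν_L}`
(with `ν ℓ + 1 ≤ i ℓ` in the `Fin M` encoding; empty sums are zero). -/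
noncomputable def cumSum (M L : ℕ) (A : (Fin L → Fin M) → ℝ) (i : Fin L → ℕ) : ℝ :=
  (1 / (M : ℝ)) * ∑ ν : Fin L → Fin M, (if ∀ ℓ, (ν ℓ : ℕ) < i ℓ then A ν else 0)


/-! The array attached to `D` consists of `M` times the volumes that `D` assigns to the unit
lattice boxes. Expanding the alternating sum over the corners of a box as a product of
one-dimensional differences shows that the box volume of a cumulative sum is the mass of the
array inside the box, so unit boxes recover the entries. Conversely, a grounded function is
determined by its unit box volumes (induct on the coordinate sum of the upper corner), so `D` is
the cumulative sum of its own array. The line sums of an array are `M` times the increments of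
its cumulative sum between consecutive margin points, which uniform margins fix to `1 / M`. -/

def boxVolume {L : ℕ} (D : (Fin L → ℕ) → ℝ) (a b : Fin L → ℕ) : ℝ :=
  ∑ ε : Fin L → Bool, boxSign ε * D (fun ℓ => if ε ℓ then b ℓ else a ℓ)

lemma boxSign_eq_prod {L : ℕ} (ε : Fin L → Bool) :
    boxSign ε = ∏ ℓ, if ε ℓ then (1 : ℝ) else -1 := by
  simp [boxSign, prod_ite, prod_const]

lemma sum_boxSign_mul_prod {L : ℕ} (f : Fin L → Bool → ℝ) :
    ∑ ε : Fin L → Bool, boxSign ε * ∏ ℓ, f ℓ (ε ℓ) = ∏ ℓ, (f ℓ true - f ℓ false) := by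
  simp_rw [boxSign_eq_prod, ← prod_mul_distrib]
  rw [← Fintype.prod_sum fun ℓ (e : Bool) => (if e then (1 : ℝ) else -1) * f ℓ e]
  refine prod_congr rfl fun ℓ _ => ?_
  simp [sub_eq_add_neg]

lemma boxVolume_eq_self_add_sum_erase {L : ℕ} (D : (Fin L → ℕ) → ℝ) (a b : Fin L → ℕ) :
    boxVolume D a b = D b + ∑ ε ∈ univ.erase (fun _ => true),
      boxSign ε * D (fun ℓ => if ε ℓ then b ℓ else a ℓ) := by
  rw [boxVolume, ← add_sum_erase _ _ (mem_univ fun _ => true)]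
  simp [boxSign]

theorem eq_of_boxVolume_eq {M L : ℕ} {F G : (Fin L → ℕ) → ℝ}
    (hF : ∀ i : Fin L → ℕ, (∀ ℓ, i ℓ ≤ M) → (∃ ℓ, i ℓ = 0) → F i = 0)
    (hG : ∀ i : Fin L → ℕ, (∀ ℓ, i ℓ ≤ M) → (∃ ℓ, i ℓ = 0) → G i = 0)
    (hvol : ∀ i : Fin L → ℕ, (∀ ℓ, 1 ≤ i ℓ ∧ i ℓ ≤ M) →
      boxVolume F (fun ℓ => i ℓ - 1) i = boxVolume G (fun ℓ => i ℓ - 1) i)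
    (i : Fin L → ℕ) (hi : ∀ ℓ, i ℓ ≤ M) : F i = G i := by
  induction hn : ∑ ℓ, i ℓ using Nat.strong_induction_on generalizing i with
  | _ n ih =>
    by_cases h0 : ∃ ℓ, i ℓ = 0
    · rw [hF i hi h0, hG i hi h0]
    push Not at h0
    have hlower : ∀ ε ∈ univ.erase (fun _ => true),
        F (fun ℓ => if ε ℓ then i ℓ else i ℓ - 1) = G (fun ℓ => if ε ℓ then i ℓ else i ℓ - 1) := by
      intro ε hε
      obtain ⟨ℓ, hℓ⟩ : ∃ ℓ, ε ℓ = false := by simpa [funext_iff] using ne_of_mem_erase hε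
      refine ih _ ?_ _ (fun l => by have := hi l; split_ifs <;> omega) rfl
      rw [← hn]
      refine sum_lt_sum (fun l _ => by split_ifs <;> omega) ⟨ℓ, mem_univ _, ?_⟩
      have := h0 ℓ
      simp only [hℓ, Bool.false_eq_true, if_false]
      omega
    have hunit := hvol i fun ℓ => ⟨Nat.one_le_iff_ne_zero.2 (h0 ℓ), hi ℓ⟩
    rw [boxVolume_eq_self_add_sum_erase, boxVolume_eq_self_add_sum_erase,
      sum_congr rfl fun ε hε => by rw [hlower ε hε]] at hunit
    exact add_right_cancel hunit

section cumSum

variable {M L : ℕ} {A : (Fin L → Fin M) → ℝ}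

lemma cumSum_nonneg (hA : ∀ ν, 0 ≤ A ν) (i : Fin L → ℕ) : 0 ≤ cumSum M L A i :=
  mul_nonneg (by positivity) (sum_nonneg fun ν _ => by split_ifs <;> simp [hA ν])

lemma cumSum_mono (hA : ∀ ν, 0 ≤ A ν) {i j : Fin L → ℕ} (hij : ∀ ℓ, i ℓ ≤ j ℓ) :
    cumSum M L A i ≤ cumSum M L A j := by
  refine mul_le_mul_of_nonneg_left (sum_le_sum fun ν _ => ?_) (by positivity)
  by_cases h : ∀ ℓ, (ν ℓ : ℕ) < i ℓ
  · rw [if_pos h, if_pos fun ℓ => (h ℓ).trans_le (hij ℓ)]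
  · rw [if_neg h]
    split_ifs <;> simp [hA ν]

lemma cumSum_eq_zero {i : Fin L → ℕ} (h : ∃ ℓ, i ℓ = 0) : cumSum M L A i = 0 := by
  obtain ⟨ℓ, hℓ⟩ := h
  rw [cumSum, sum_eq_zero fun ν _ => if_neg fun h => by simpa [hℓ] using h ℓ, mul_zero]

lemma boxVolume_cumSum {a b : Fin L → ℕ} (hab : ∀ ℓ, a ℓ ≤ b ℓ) :
    boxVolume (cumSum M L A) a b =
      1 / M * ∑ ν : Fin L → Fin M, if ∀ ℓ, a ℓ ≤ ν ℓ ∧ (ν ℓ : ℕ) < b ℓ then A ν else 0 := by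
  have hprod : ∀ (c : Fin L → ℕ) (ν : Fin L → Fin M), (if ∀ ℓ, (ν ℓ : ℕ) < c ℓ then A ν else 0) =
      (∏ ℓ, if (ν ℓ : ℕ) < c ℓ then (1 : ℝ) else 0) * A ν := by
    intro c ν
    rw [prod_boole]
    simp [ite_mul]
  simp only [boxVolume, cumSum, hprod, mul_sum, mul_left_comm (boxSign _) (1 / (M : ℝ))]
  rw [sum_comm]
  refine sum_congr rfl fun ν _ => ?_
  rw [← mul_sum]
  congr 1
  calc ∑ ε : Fin L → Bool, boxSign ε *
        ((∏ ℓ, if (ν ℓ : ℕ) < (if ε ℓ then b ℓ else a ℓ) then (1 : ℝ) else 0) * A ν)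
      = (∏ ℓ, ((if (ν ℓ : ℕ) < b ℓ then (1 : ℝ) else 0) - if (ν ℓ : ℕ) < a ℓ then 1 else 0))
          * A ν := by
        simp_rw [← mul_assoc, ← sum_mul,
          sum_boxSign_mul_prod fun ℓ e => if (ν ℓ : ℕ) < (if e then b ℓ else a ℓ) then 1 else 0]
        simp
    _ = if ∀ ℓ, a ℓ ≤ ν ℓ ∧ (ν ℓ : ℕ) < b ℓ then A ν else 0 := by
        have hdiff : ∀ ℓ,
            ((if (ν ℓ : ℕ) < b ℓ then (1 : ℝ) else 0) - if (ν ℓ : ℕ) < a ℓ then 1 else 0) =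
              if a ℓ ≤ ν ℓ ∧ (ν ℓ : ℕ) < b ℓ then 1 else 0 := by
          intro ℓ
          have := hab ℓ
          split_ifs <;> first | omega | norm_num
        simp_rw [hdiff, prod_boole, ite_mul, one_mul, zero_mul, mem_univ, true_imp_iff]

lemma boxVolume_cumSum_unit {i : Fin L → ℕ} (hi : ∀ ℓ, 1 ≤ i ℓ ∧ i ℓ ≤ M) :
    boxVolume (cumSum M L A) (fun ℓ => i ℓ - 1) i =
      A (fun ℓ => ⟨i ℓ - 1, by have := hi ℓ; omega⟩) / M := by
  rw [boxVolume_cumSum fun ℓ => Nat.sub_le _ _, one_div_mul_eq_div]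
  congr 1
  rw [← Fintype.sum_ite_eq' (fun ℓ => (⟨i ℓ - 1, by have := hi ℓ; omega⟩ : Fin M)) A]
  refine sum_congr rfl fun ν _ => if_congr ?_ rfl rfl
  simp only [funext_iff, Fin.ext_iff]
  exact forall_congr' fun ℓ => by have := hi ℓ; omega

lemma forall_lt_margin_iff (ν : Fin L → Fin M) (ℓ : Fin L) (k : ℕ) :
    (∀ l, (ν l : ℕ) < if l = ℓ then k else M) ↔ (ν ℓ : ℕ) < k := by
  refine ⟨fun h => by simpa using h ℓ, fun h l => ?_⟩
  split_ifs with hl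
  · exact hl ▸ h
  · exact (ν l).isLt

lemma cumSum_margin_succ_sub (ℓ : Fin L) (j : Fin M) :
    cumSum M L A (fun l => if l = ℓ then (j : ℕ) + 1 else M) -
        cumSum M L A (fun l => if l = ℓ then (j : ℕ) else M) =
      1 / M * ∑ ν : Fin L → Fin M, if ν ℓ = j then A ν else 0 := by
  simp only [cumSum, forall_lt_margin_iff, ← mul_sub, ← sum_sub_distrib]
  refine congrArg _ (sum_congr rfl fun ν _ => ?_)
  simp only [Fin.ext_iff]
  split_ifs <;> first | omega | ring

lemma cumSum_margin (hA : IsStochasticArray M L A) (ℓ : Fin L) {k : ℕ} (hk : k ≤ M) :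
    cumSum M L A (fun l => if l = ℓ then k else M) = k / M := by
  induction k with
  | zero => simp [cumSum_eq_zero (i := fun l => if l = ℓ then 0 else M) ⟨ℓ, if_pos rfl⟩]
  | succ k ih =>
    have hstep := cumSum_margin_succ_sub (A := A) ℓ ⟨k, hk⟩
    rw [hA.2, ih (by omega)] at hstep
    rw [sub_eq_iff_eq_add'.1 hstep]
    push_cast
    ring

end cumSum

lemma boxVolume_congr {N L : ℕ} {F G : (Fin L → ℕ) → ℝ} {a b : Fin L → ℕ}
    (ha : ∀ ℓ, a ℓ ≤ N) (hb : ∀ ℓ, b ℓ ≤ N) (h : ∀ x : Fin L → ℕ, (∀ ℓ, x ℓ ≤ N) → F x = G x) :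
    boxVolume F a b = boxVolume G a b :=
  sum_congr rfl fun ε _ => by
    rw [h _ fun ℓ => by split_ifs; exacts [hb ℓ, ha ℓ]]

theorem IsStochasticArray.isDiscreteCopula {M L : ℕ} {A : (Fin L → Fin M) → ℝ}
    {D : (Fin L → ℕ) → ℝ} (hM : 0 < M) (hL : 0 < L) (hA : IsStochasticArray M L A)
    (hD : ∀ i : Fin L → ℕ, (∀ ℓ, i ℓ ≤ M) → D i = cumSum M L A i) :
    IsDiscreteCopula M L D := by
  refine ⟨fun i hi => ?_, fun i hi h0 => ?_, fun ℓ k hk => ?_, fun i hi => ?_⟩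
  · rw [hD i hi]
    refine ⟨cumSum_nonneg hA.1 i, ?_⟩
    calc cumSum M L A i ≤ cumSum M L A (fun l => if l = ⟨0, hL⟩ then M else M) :=
          cumSum_mono hA.1 fun l => by simpa using hi l
      _ = 1 := by rw [cumSum_margin hA _ le_rfl, div_self (by positivity)]
  · rw [hD i hi, cumSum_eq_zero h0]
  · rw [hD _ fun l => by split_ifs <;> omega, cumSum_margin hA ℓ hk]
  · change 0 ≤ boxVolume D (fun ℓ => i ℓ - 1) i
    rw [boxVolume_congr (fun ℓ => by have := hi ℓ; omega) (fun ℓ => (hi ℓ).2) hD,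
      boxVolume_cumSum_unit hi]
    exact div_nonneg (hA.1 _) (Nat.cast_nonneg M)

def massArray (M L : ℕ) (D : (Fin L → ℕ) → ℝ) (ν : Fin L → Fin M) : ℝ :=
  M * boxVolume D (fun ℓ => ν ℓ) (fun ℓ => ν ℓ + 1)

theorem IsDiscreteCopula.eq_cumSum_massArray {M L : ℕ} {D : (Fin L → ℕ) → ℝ} (hM : 0 < M)
    (hD : IsDiscreteCopula M L D) (i : Fin L → ℕ) (hi : ∀ ℓ, i ℓ ≤ M) :
    D i = cumSum M L (massArray M L D) i := by
  refine eq_of_boxVolume_eq hD.2.1 (fun _ _ h0 => cumSum_eq_zero h0) (fun i hi => ?_) i hi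
  have hcorner : (fun ℓ => i ℓ - 1 + 1) = i := funext fun ℓ => by have := hi ℓ; omega
  rw [boxVolume_cumSum_unit hi, massArray]
  simp only [hcorner]
  field_simp

theorem IsDiscreteCopula.isStochasticArray_massArray {M L : ℕ} {D : (Fin L → ℕ) → ℝ}
    (hD : IsDiscreteCopula M L D) : IsStochasticArray M L (massArray M L D) := by
  refine ⟨fun ν => mul_nonneg (Nat.cast_nonneg M) ?_, fun ℓ j => ?_⟩
  · exact hD.2.2.2 (fun ℓ => ν ℓ + 1) fun ℓ => ⟨Nat.le_add_left 1 _, (ν ℓ).isLt⟩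
  · have hM : 0 < M := j.pos
    have hstep := cumSum_margin_succ_sub (A := massArray M L D) ℓ j
    rw [← hD.eq_cumSum_massArray hM _ fun l => by split_ifs <;> omega,
      ← hD.eq_cumSum_massArray hM _ fun l => by split_ifs <;> omega,
      hD.2.2.1 ℓ _ j.isLt, hD.2.2.1 ℓ _ j.isLt.le] at hstep
    field_simp at hstep
    push_cast at hstep
    linarith

/-- `D` is a discrete copula iff it is the cumulative sum of some
`L`-dimensional stochastic array of order `M`. -/
theorem discreteCopula_iff_stochasticArray (M L : ℕ) (hM : 0 < M) (hL : 2 ≤ L)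
    (D : (Fin L → ℕ) → ℝ) :
    IsDiscreteCopula M L D ↔
      ∃ A : (Fin L → Fin M) → ℝ, IsStochasticArray M L A ∧
        ∀ i : Fin L → ℕ, (∀ ℓ, i ℓ ≤ M) → D i = cumSum M L A i := by
  constructor
  · intro hD
    exact ⟨massArray M L D, hD.isStochasticArray_massArray, hD.eq_cumSum_massArray hM⟩
  · rintro ⟨A, hA, hDA⟩
    exact hA.isDiscreteCopula hM (by omega) hDA
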